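/- arXiv:2601.22102 — 2 statements merged into one kernel-verified Lean document; each statement's English description precedes it below -/
import Mathlib

section
/- For every x ∈ ℝ^d \ {0} and ν > 0, the Lennard-Jones force satisfies the pointwise bound |K(x)| ≤ C_{1,ν} ε (|x|^{−(a+1)} 𝟙_{|x|≤ν} + |x|^{−(b+1)} 𝟙_{|x|>ν}), where C_{1,ν} = max{(a+1)R₀^a + (b+1)R₀^b ν^{a−b}, (a+1)R₀^a ν^{−(a−b)} + (b+1)R₀^b}. -/
/-!
Write `r = ‖x‖`, so that `‖K(x)‖ = ε |R₀^a r^{-(a+1)} - R₀^b r^{-(b+1)}| ≤ ε (R₀^a r^{-(a+1)} + R₀^b r^{-(b+1)})`.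
The two powers of `r` differ by the factor `r^{a-b}`, which is at most `ν^{a-b}` when `r ≤ ν`, and whose
inverse is at most `ν^{-(a-b)}` when `r > ν`; this trades the slower power for the dominant one in each
regime, and the resulting coefficients are dominated by the two arguments of the maximum `C_{1,ν}`.
-/

open MeasureTheory Metric Real Set

noncomputable def LJ (d : ℕ) (ε R₀ a b : ℝ) (x : EuclideanSpace ℝ (Fin d)) :
    EuclideanSpace ℝ (Fin d) :=
  (ε * (R₀ ^ a / ‖x‖ ^ (a + 1) - R₀ ^ b / ‖x‖ ^ (b + 1))) • (‖x‖⁻¹ • x)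

/-- The constant C_{1,ν}. -/
noncomputable def C1nu (R₀ a b ν : ℝ) : ℝ :=
  max ((a + 1) * R₀ ^ a + (b + 1) * R₀ ^ b * ν ^ (a - b))
    ((a + 1) * R₀ ^ a * ν ^ (-(a - b)) + (b + 1) * R₀ ^ b)

theorem norm_LJ {d : ℕ} (ε R₀ a b : ℝ) {x : EuclideanSpace ℝ (Fin d)} (hx : x ≠ 0) :
    ‖LJ d ε R₀ a b x‖ = |ε| * |R₀ ^ a / ‖x‖ ^ (a + 1) - R₀ ^ b / ‖x‖ ^ (b + 1)| := by
  have hunit : ‖‖x‖⁻¹ • x‖ = 1 := norm_smul_inv_norm hx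
  rw [LJ, norm_smul, hunit, mul_one, Real.norm_eq_abs, abs_mul]

theorem Real.rpow_neg_le_mul_rpow_neg {r s t c : ℝ} (hr : 0 < r) (hs : r ^ s ≤ c) :
    r ^ (-t) ≤ c * r ^ (-(t + s)) :=
  calc r ^ (-t) = r ^ s * r ^ (-(t + s)) := by rw [← rpow_add hr]; ring_nf
    _ ≤ c * r ^ (-(t + s)) := by gcongr

theorem abs_mul_sub_mul_le_of_le_mul {A B u v c : ℝ} (hA : 0 ≤ A) (hB : 0 ≤ B) (hu : 0 ≤ u)
    (hv : 0 ≤ v) (hvu : v ≤ c * u) : |A * u - B * v| ≤ (A + B * c) * u :=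
  calc |A * u - B * v| ≤ |A * u| + |B * v| := abs_sub _ _
    _ = A * u + B * v := by rw [abs_of_nonneg (by positivity), abs_of_nonneg (by positivity)]
    _ ≤ A * u + B * (c * u) := by gcongr
    _ = (A + B * c) * u := by ring

section C1nu

variable {R₀ a b ν : ℝ}

theorem le_C1nu_of_le (hR : 0 ≤ R₀) (hb : 0 ≤ b) (hba : b ≤ a) (hν : 0 ≤ ν) :
    R₀ ^ a + R₀ ^ b * ν ^ (a - b) ≤ C1nu R₀ a b ν := by
  have hRa : 0 ≤ R₀ ^ a := rpow_nonneg hR a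
  have hRbν : 0 ≤ R₀ ^ b * ν ^ (a - b) := by positivity
  refine le_max_of_le_left ?_
  nlinarith

theorem le_C1nu_of_lt (hR : 0 ≤ R₀) (hb : 0 ≤ b) (hba : b ≤ a) (hν : 0 ≤ ν) :
    R₀ ^ a * ν ^ (-(a - b)) + R₀ ^ b ≤ C1nu R₀ a b ν := by
  have hRaν : 0 ≤ R₀ ^ a * ν ^ (-(a - b)) := by positivity
  have hRb : 0 ≤ R₀ ^ b := rpow_nonneg hR b
  refine le_max_of_le_right ?_
  nlinarith

theorem abs_LJ_profile_le_of_le (hR : 0 ≤ R₀) (hb : 0 ≤ b) (hba : b ≤ a) {r : ℝ} (hr : 0 < r)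
    (hrν : r ≤ ν) :
    |R₀ ^ a / r ^ (a + 1) - R₀ ^ b / r ^ (b + 1)| ≤ C1nu R₀ a b ν * r ^ (-(a + 1)) := by
  have hslow : r ^ (-(b + 1)) ≤ ν ^ (a - b) * r ^ (-(a + 1)) := by
    convert rpow_neg_le_mul_rpow_neg hr (rpow_le_rpow hr.le hrν (sub_nonneg.2 hba)) using 4
    ring
  simp only [div_eq_mul_inv, ← rpow_neg hr.le]
  calc _ ≤ (R₀ ^ a + R₀ ^ b * ν ^ (a - b)) * r ^ (-(a + 1)) :=
        abs_mul_sub_mul_le_of_le_mul (rpow_nonneg hR a) (rpow_nonneg hR b) (by positivity)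
          (by positivity) hslow
    _ ≤ C1nu R₀ a b ν * r ^ (-(a + 1)) := by
        gcongr
        exact le_C1nu_of_le hR hb hba (hr.le.trans hrν)

theorem abs_LJ_profile_le_of_lt (hR : 0 ≤ R₀) (hb : 0 ≤ b) (hba : b ≤ a) (hν : 0 < ν) {r : ℝ}
    (hνr : ν < r) :
    |R₀ ^ a / r ^ (a + 1) - R₀ ^ b / r ^ (b + 1)| ≤ C1nu R₀ a b ν * r ^ (-(b + 1)) := by
  have hr : 0 < r := hν.trans hνr
  have hfast : r ^ (-(a + 1)) ≤ ν ^ (-(a - b)) * r ^ (-(b + 1)) := by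
    convert rpow_neg_le_mul_rpow_neg hr
      (rpow_le_rpow_of_nonpos hν hνr.le (neg_nonpos.2 (sub_nonneg.2 hba))) using 4
    ring
  simp only [div_eq_mul_inv, ← rpow_neg hr.le]
  rw [abs_sub_comm]
  calc _ ≤ (R₀ ^ b + R₀ ^ a * ν ^ (-(a - b))) * r ^ (-(b + 1)) :=
        abs_mul_sub_mul_le_of_le_mul (rpow_nonneg hR b) (rpow_nonneg hR a) (by positivity)
          (by positivity) hfast
    _ ≤ C1nu R₀ a b ν * r ^ (-(b + 1)) := by
        gcongr
        rw [add_comm]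
        exact le_C1nu_of_lt hR hb hba hν.le

end C1nu

theorem LJ_pointwise_bound_general (d : ℕ) (ε R₀ a b : ℝ)
    (hε : 0 < ε) (hR : 0 < R₀) (hb : 0 < b) (hba : b < a) (ν : ℝ) (hν : 0 < ν) :
    ∀ x : EuclideanSpace ℝ (Fin d), x ≠ 0 →
      ‖LJ d ε R₀ a b x‖ ≤ C1nu R₀ a b ν * ε *
        (Set.indicator {y : EuclideanSpace ℝ (Fin d) | ‖y‖ ≤ ν}
            (fun y => ‖y‖ ^ (-(a + 1))) x +
         Set.indicator {y : EuclideanSpace ℝ (Fin d) | ν < ‖y‖}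
            (fun y => ‖y‖ ^ (-(b + 1))) x) := by
  intro x hx
  rw [norm_LJ ε R₀ a b hx, abs_of_pos hε, mul_comm (C1nu R₀ a b ν), mul_assoc]
  refine mul_le_mul_of_nonneg_left ?_ hε.le
  rcases le_or_gt ‖x‖ ν with hxν | hνx
  · simpa [Set.indicator, hxν, not_lt.2 hxν] using
      abs_LJ_profile_le_of_le hR.le hb.le hba.le (norm_pos_iff.2 hx) hxν
  · simpa [Set.indicator, hνx, not_le.2 hνx] using
      abs_LJ_profile_le_of_lt hR.le hb.le hba.le hν hνx

/-- Pointwise bound: for every x ≠ 0,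
|K(x)| ≤ C_{1,ν} ε (|x|^{−(a+1)} 𝟙_{|x|≤ν} + |x|^{−(b+1)} 𝟙_{|x|>ν}). -/
theorem LJ_pointwise_bound (d : ℕ) (hd : 2 ≤ d) (ε R₀ a b : ℝ)
    (hε : 0 < ε) (hR : 0 < R₀) (hb : 0 < b) (hba : b < a) (ν : ℝ) (hν : 0 < ν) :
    ∀ x : EuclideanSpace ℝ (Fin d), x ≠ 0 →
      ‖LJ d ε R₀ a b x‖ ≤ C1nu R₀ a b ν * ε *
        (Set.indicator {y : EuclideanSpace ℝ (Fin d) | ‖y‖ ≤ ν}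
            (fun y => ‖y‖ ^ (-(a + 1))) x +
         Set.indicator {y : EuclideanSpace ℝ (Fin d) | ν < ‖y‖}
            (fun y => ‖y‖ ^ (-(b + 1))) x) :=
  LJ_pointwise_bound_general d ε R₀ a b hε hR hb hba ν hν
end

section
/- Let d ≥ 2, 0 < b < a < d−1, q ∈ (d/(b+1), ∞), p ∈ [1, d/(a+1)), and r > 1 with 1/r = 1 + 1/q − 1/p. Then convolution with the Lennard-Jones kernel K maps L¹ ∩ L^r(ℝ^d) boundedly into L^q(ℝ^d): there exists C > 0 such that ‖K∗f‖_{L^q} ≤ C(‖f‖_{L¹} + ‖f‖_{L^r}) for all f ∈ L¹ ∩ L^r(ℝ^d). -/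
open MeasureTheory Metric Real Set
open scoped ENNReal

namespace LJaux

variable {d : ℕ}

local notation "Ed" => EuclideanSpace ℝ (Fin d)

lemma mp_sub_left (x : Ed) :
    MeasurePreserving (fun t : Ed => x - t) volume volume := by
  have : (fun t : Ed => x - t) = (fun t : Ed => x + t) ∘ Neg.neg := by
    funext t; simp [sub_eq_add_neg]
  rw [this]
  exact (measurePreserving_add_left volume x).comp (Measure.measurePreserving_neg volume)

lemma mp_sub_right (y : Ed) :
    MeasurePreserving (fun t : Ed => t - y) volume volume := by
  have : (fun t : Ed => t - y) = (fun t : Ed => t + (-y)) := by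
    funext t; simp [sub_eq_add_neg]
  rw [this]
  exact measurePreserving_add_right volume (-y)

lemma lint_sub_left (F : Ed → ℝ≥0∞) (hF : AEMeasurable F (volume : Measure Ed)) (x : Ed) :
    ∫⁻ y, F (x - y) = ∫⁻ y, F y := by
  have h := mp_sub_left x
  calc ∫⁻ y, F (x - y) = ∫⁻ a, F a ∂(Measure.map (fun t : Ed => x - t) volume) :=
        (lintegral_map' (by rwa [h.map_eq]) h.measurable.aemeasurable).symm
    _ = ∫⁻ y, F y := by rw [h.map_eq]

lemma lint_sub_right (F : Ed → ℝ≥0∞) (hF : AEMeasurable F (volume : Measure Ed)) (y : Ed) :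
    ∫⁻ x, F (x - y) = ∫⁻ x, F x := by
  have h := mp_sub_right y
  calc ∫⁻ x, F (x - y) = ∫⁻ a, F a ∂(Measure.map (fun t : Ed => t - y) volume) :=
        (lintegral_map' (by rwa [h.map_eq]) h.measurable.aemeasurable).symm
    _ = ∫⁻ x, F x := by rw [h.map_eq]

/-- Young's inequality, case where one factor is in `L¹`:
`‖G ∗ F‖_s ≤ ‖G‖_s ‖F‖_1` (as `s`-th powers, in the `ℝ≥0∞` world). -/
lemma young_one (F G : Ed → ℝ≥0∞) (hF : Measurable F) (hG : Measurable G)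
    {s : ℝ} (hs : 1 < s) (hB : (∫⁻ x, F x ∂(volume : Measure Ed)) ≠ ∞) :
    ∫⁻ x, (∫⁻ y, G y * F (x - y)) ^ s ∂(volume : Measure Ed)
      ≤ (∫⁻ x, G x ^ s ∂(volume : Measure Ed)) * (∫⁻ x, F x ∂(volume : Measure Ed)) ^ s := by
  set B := ∫⁻ x, F x ∂(volume : Measure Ed) with hBdef
  have hs0 : (0:ℝ) < s := by linarith
  have hcon : s.HolderConjugate (s/(s-1)) := (Real.holderConjugate_iff_eq_conjExponent hs).mpr rfl
  set t := s/(s-1) with htdef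
  have ht0 : (0:ℝ) < t := hcon.symm.left_pos
  have key : ∀ x : Ed, (∫⁻ y, G y * F (x - y))
      ≤ (∫⁻ y, G y ^ s * F (x - y)) ^ (1/s) * B ^ (1/t) := by
    intro x
    have hFx : Measurable fun y : Ed => F (x - y) := hF.comp (measurable_const.sub measurable_id)
    have h1 : (fun y : Ed => G y * F (x - y))
        = fun y => ((G y ^ s * F (x - y)) ^ (1/s)) * (F (x - y) ^ (1/t)) := by
      funext y
      rw [ENNReal.mul_rpow_of_nonneg _ _ (by positivity), ← ENNReal.rpow_mul,
        mul_one_div_cancel hs0.ne', ENNReal.rpow_one, mul_assoc,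
        ← ENNReal.rpow_add_of_nonneg _ _ (by positivity) (by positivity),
        one_div, one_div, hcon.inv_add_inv_eq_one, ENNReal.rpow_one]
    calc ∫⁻ y, G y * F (x - y)
        = ∫⁻ y, ((G y ^ s * F (x - y)) ^ (1/s)) * (F (x - y) ^ (1/t)) := by rw [h1]
      _ ≤ (∫⁻ y, (((G y ^ s * F (x - y)) ^ (1/s)) : ℝ≥0∞) ^ s) ^ (1/s)
            * (∫⁻ y, ((F (x - y) ^ (1/t)) : ℝ≥0∞) ^ t) ^ (1/t) :=
          ENNReal.lintegral_mul_le_Lp_mul_Lq volume hcon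
            (((hG.pow_const s).mul hFx).pow_const _).aemeasurable
            ((hFx.pow_const _)).aemeasurable
      _ = (∫⁻ y, G y ^ s * F (x - y)) ^ (1/s) * (∫⁻ y, F (x - y)) ^ (1/t) := by
          congr 1
          · congr 1
            exact lintegral_congr fun y => by
              rw [← ENNReal.rpow_mul, one_div, inv_mul_cancel₀ hs0.ne', ENNReal.rpow_one]
          · congr 1
            exact lintegral_congr fun y => by
              rw [← ENNReal.rpow_mul, one_div, inv_mul_cancel₀ ht0.ne', ENNReal.rpow_one]
      _ = (∫⁻ y, G y ^ s * F (x - y)) ^ (1/s) * B ^ (1/t) := by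
          rw [lint_sub_left _ hF.aemeasurable x]
  have e1 : 1/s * s = 1 := by field_simp
  have e2 : 1/t * s = s/t := by ring
  calc ∫⁻ x, (∫⁻ y, G y * F (x - y)) ^ s
      ≤ ∫⁻ x, ((∫⁻ y, G y ^ s * F (x - y)) ^ (1/s) * B ^ (1/t)) ^ s :=
        lintegral_mono fun x => ENNReal.rpow_le_rpow (key x) hs0.le
    _ = ∫⁻ x, (∫⁻ y, G y ^ s * F (x - y)) * B ^ (s/t) := by
        apply lintegral_congr; intro x
        rw [ENNReal.mul_rpow_of_nonneg _ _ hs0.le, ← ENNReal.rpow_mul, ← ENNReal.rpow_mul,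
          e1, e2, ENNReal.rpow_one]
    _ = (∫⁻ x, ∫⁻ y, G y ^ s * F (x - y)) * B ^ (s/t) :=
        lintegral_mul_const' _ _ (ENNReal.rpow_ne_top_of_nonneg (by positivity) hB)
    _ = (∫⁻ y, ∫⁻ x, G y ^ s * F (x - y)) * B ^ (s/t) := by
        rw [lintegral_lintegral_swap]
        exact (((ENNReal.continuous_rpow_const.measurable).comp (hG.comp measurable_snd)).mul
          (hF.comp (measurable_fst.sub measurable_snd))).aemeasurable
    _ = (∫⁻ y, G y ^ s * B) * B ^ (s/t) := by
        congr 1; apply lintegral_congr; intro y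
        have hm : Measurable fun x : Ed => F (x - y) :=
          hF.comp (measurable_id'.sub measurable_const)
        rw [lintegral_const_mul _ hm, lint_sub_right _ hF.aemeasurable y]
    _ = (∫⁻ y, G y ^ s) * B * B ^ (s/t) := by rw [lintegral_mul_const' _ _ hB]
    _ = (∫⁻ x, G x ^ s) * B ^ s := by
        rw [mul_assoc]
        congr 1
        have hts : 1 + s/t = s := by
          have : s/t = s - 1 := by rw [htdef]; field_simp
          rw [this]; ring
        calc B * B ^ (s/t) = B ^ (1:ℝ) * B ^ (s/t) := by rw [ENNReal.rpow_one]
          _ = B ^ (1 + s/t) := (ENNReal.rpow_add_of_nonneg _ _ zero_le_one (by positivity)).symm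
          _ = B ^ s := by rw [hts]

/-- Young's inequality, generic case `1 < p, r`. -/
lemma young_gen (F G : Ed → ℝ≥0∞) (hF : Measurable F) (hG : Measurable G)
    {p r q : ℝ} (hp : 1 < p) (hr : 1 < r) (hq : 1 < q) (hpqr : 1/p + 1/r = 1 + 1/q)
    (hA : (∫⁻ x, G x ^ p ∂(volume : Measure Ed)) ≠ ∞)
    (hB : (∫⁻ x, F x ^ r ∂(volume : Measure Ed)) ≠ ∞) :
    ∫⁻ x, (∫⁻ y, G y * F (x - y)) ^ q ∂(volume : Measure Ed)
      ≤ (∫⁻ x, G x ^ p ∂(volume : Measure Ed)) ^ (q/p)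
        * (∫⁻ x, F x ^ r ∂(volume : Measure Ed)) ^ (q/r) := by
  set A := ∫⁻ x, G x ^ p ∂(volume : Measure Ed) with hAdef
  set B := ∫⁻ x, F x ^ r ∂(volume : Measure Ed) with hBdef
  have hp0 : (0:ℝ) < p := by linarith
  have hr0 : (0:ℝ) < r := by linarith
  have hq0 : (0:ℝ) < q := by linarith
  set a1 : ℝ := 1/p - 1/q with ha1def
  set a2 : ℝ := 1/r - 1/q with ha2def
  have ha1 : 0 < a1 := by
    have h1 : 1/r < 1 := by rw [div_lt_one hr0]; exact hr
    have h2 : 1/p - 1/q = 1 - 1/r := by linarith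
    rw [ha1def, h2]; linarith
  have ha2 : 0 < a2 := by
    have h1 : 1/p < 1 := by rw [div_lt_one hp0]; exact hp
    have h2 : 1/r - 1/q = 1 - 1/p := by linarith
    rw [ha2def, h2]; linarith
  have hsum : 1/q + a1 + a2 = 1 := by rw [ha1def, ha2def]; linarith
  have hconq : q.HolderConjugate (q/(q-1)) := (Real.holderConjugate_iff_eq_conjExponent hq).mpr rfl
  set q' : ℝ := q/(q-1) with hq'def
  have hq'0 : (0:ℝ) < q' := hconq.symm.left_pos
  have hq'inv : 1/q' = a1 + a2 := by
    have h := hconq.inv_add_inv_eq_one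
    rw [← one_div q, ← one_div q'] at h; linarith [hsum]
  have hcon2 : (q'*a1)⁻¹.HolderConjugate (q'*a2)⁻¹ := by
    refine Real.HolderConjugate.inv_inv (by positivity) (by positivity) ?_
    rw [← mul_add, ← hq'inv]
    field_simp
  set m1 : ℝ := (q'*a1)⁻¹ with hm1def
  set m2 : ℝ := (q'*a2)⁻¹ with hm2def
  have hm10 : (0:ℝ) < m1 := hcon2.left_pos
  have hm20 : (0:ℝ) < m2 := hcon2.symm.left_pos
  have hx1 : (a1 * q') * m1 = 1 := by
    rw [hm1def, mul_comm q' a1, mul_inv_cancel₀ (by positivity : a1 * q' ≠ 0)]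
  have hx2 : (a2 * q') * m2 = 1 := by
    rw [hm2def, mul_comm q' a2, mul_inv_cancel₀ (by positivity : a2 * q' ≠ 0)]
  have ea1 : 1/m1 * (1/q') = a1 := by
    rw [hm1def, one_div, inv_inv]; field_simp
  have ea2 : 1/m2 * (1/q') = a2 := by
    rw [hm2def, one_div, inv_inv]; field_simp
  have key : ∀ x : Ed, (∫⁻ y, G y * F (x - y))
      ≤ (∫⁻ y, G y ^ p * F (x - y) ^ r) ^ (1/q) * (A ^ a1 * B ^ a2) := by
    intro x
    have hFx : Measurable fun y : Ed => F (x - y) :=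
      hF.comp (measurable_const.sub measurable_id)
    have hGpe : p * (1/q) + p * a1 = 1 := by
      rw [ha1def]; field_simp; ring
    have hFpe : r * (1/q) + r * a2 = 1 := by
      rw [ha2def]; field_simp; ring
    have h1 : (fun y : Ed => G y * F (x - y))
        = fun y => ((G y ^ p * F (x - y) ^ r) ^ (1/q))
            * ((G y ^ (p * a1)) * (F (x - y) ^ (r * a2))) := by
      funext y
      rw [ENNReal.mul_rpow_of_nonneg _ _ (by positivity), ← ENNReal.rpow_mul,
        ← ENNReal.rpow_mul]
      calc G y * F (x - y) = (G y ^ (p * (1/q)) * G y ^ (p * a1))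
            * (F (x - y) ^ (r * (1/q)) * F (x - y) ^ (r * a2)) := by
            rw [← ENNReal.rpow_add_of_nonneg _ _ (by positivity) (by positivity),
              ← ENNReal.rpow_add_of_nonneg _ _ (by positivity) (by positivity),
              hGpe, hFpe, ENNReal.rpow_one, ENNReal.rpow_one]
        _ = G y ^ (p * (1/q)) * F (x - y) ^ (r * (1/q))
            * (G y ^ (p * a1) * F (x - y) ^ (r * a2)) := by ring
    have h2 : (∫⁻ y, ((G y ^ (p*a1)) * (F (x - y) ^ (r*a2))) ^ q') ^ (1/q')
        ≤ A ^ a1 * B ^ a2 := by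
      have hrw : (fun y : Ed => ((G y ^ (p*a1)) * (F (x - y) ^ (r*a2))) ^ q')
          = fun y => (G y ^ (p * (a1 * q'))) * (F (x - y) ^ (r * (a2 * q'))) := by
        funext y
        rw [ENNReal.mul_rpow_of_nonneg _ _ hq'0.le, ← ENNReal.rpow_mul, ← ENNReal.rpow_mul,
          mul_assoc, mul_assoc]
      rw [hrw]
      have hold : (∫⁻ y, (G y ^ (p * (a1 * q'))) * (F (x - y) ^ (r * (a2 * q'))))
          ≤ (∫⁻ y, (G y ^ (p * (a1 * q'))) ^ m1) ^ (1/m1)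
            * (∫⁻ y, (F (x - y) ^ (r * (a2 * q'))) ^ m2) ^ (1/m2) :=
        ENNReal.lintegral_mul_le_Lp_mul_Lq volume hcon2
          (hG.pow_const _).aemeasurable (hFx.pow_const _).aemeasurable
      have hint1 : (∫⁻ y, (G y ^ (p * (a1 * q'))) ^ m1) = A := by
        rw [hAdef]; apply lintegral_congr; intro y
        rw [← ENNReal.rpow_mul, mul_assoc, hx1, mul_one]
      have hint2 : (∫⁻ y, (F (x - y) ^ (r * (a2 * q'))) ^ m2) = B := by
        have : (fun y : Ed => (F (x - y) ^ (r * (a2 * q'))) ^ m2)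
            = fun y => (fun z : Ed => F z ^ r) (x - y) := by
          funext y
          show (F (x - y) ^ (r * (a2 * q'))) ^ m2 = F (x - y) ^ r
          rw [← ENNReal.rpow_mul, mul_assoc, hx2, mul_one]
        rw [this, lint_sub_left _ (hF.pow_const r).aemeasurable x, hBdef]
      calc (∫⁻ y, (G y ^ (p * (a1 * q'))) * (F (x - y) ^ (r * (a2 * q')))) ^ (1/q')
          ≤ ((∫⁻ y, (G y ^ (p * (a1 * q'))) ^ m1) ^ (1/m1)
              * (∫⁻ y, (F (x - y) ^ (r * (a2 * q'))) ^ m2) ^ (1/m2)) ^ (1/q') :=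
            ENNReal.rpow_le_rpow hold (by positivity)
        _ = (A ^ (1/m1) * B ^ (1/m2)) ^ (1/q') := by rw [hint1, hint2]
        _ = A ^ a1 * B ^ a2 := by
            rw [ENNReal.mul_rpow_of_nonneg _ _ (by positivity), ← ENNReal.rpow_mul,
              ← ENNReal.rpow_mul, ea1, ea2]
    calc ∫⁻ y, G y * F (x - y)
        = ∫⁻ y, ((G y ^ p * F (x - y) ^ r) ^ (1/q))
            * ((G y ^ (p * a1)) * (F (x - y) ^ (r * a2))) := by rw [h1]
      _ ≤ (∫⁻ y, (((G y ^ p * F (x - y) ^ r) ^ (1/q)) : ℝ≥0∞) ^ q) ^ (1/q)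
            * (∫⁻ y, (((G y ^ (p*a1)) * (F (x - y) ^ (r*a2))) : ℝ≥0∞) ^ q') ^ (1/q') :=
          ENNReal.lintegral_mul_le_Lp_mul_Lq volume hconq
            (((((hG.pow_const p).mul (hFx.pow_const r))).pow_const _)).aemeasurable
            (((hG.pow_const _).mul (hFx.pow_const _))).aemeasurable
      _ = (∫⁻ y, G y ^ p * F (x - y) ^ r) ^ (1/q)
            * (∫⁻ y, (((G y ^ (p*a1)) * (F (x - y) ^ (r*a2))) : ℝ≥0∞) ^ q') ^ (1/q') := by
          congr 1
          congr 1
          exact lintegral_congr fun y => by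
            rw [← ENNReal.rpow_mul, one_div, inv_mul_cancel₀ hq0.ne', ENNReal.rpow_one]
      _ ≤ (∫⁻ y, G y ^ p * F (x - y) ^ r) ^ (1/q) * (A ^ a1 * B ^ a2) :=
          mul_le_mul_right h2 _
  -- now integrate in x
  have hCne : (A ^ a1 * B ^ a2) ^ q ≠ ∞ := by
    apply ENNReal.rpow_ne_top_of_nonneg hq0.le
    exact ENNReal.mul_ne_top (ENNReal.rpow_ne_top_of_nonneg ha1.le hA)
      (ENNReal.rpow_ne_top_of_nonneg ha2.le hB)
  have hqa1 : 1 + q * a1 = q / p := by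
    rw [ha1def]; field_simp; ring
  have hqa2 : 1 + q * a2 = q / r := by
    rw [ha2def]; field_simp; ring
  calc ∫⁻ x, (∫⁻ y, G y * F (x - y)) ^ q
      ≤ ∫⁻ x, ((∫⁻ y, G y ^ p * F (x - y) ^ r) ^ (1/q) * (A ^ a1 * B ^ a2)) ^ q :=
        lintegral_mono fun x => ENNReal.rpow_le_rpow (key x) hq0.le
    _ = ∫⁻ x, (∫⁻ y, G y ^ p * F (x - y) ^ r) * (A ^ a1 * B ^ a2) ^ q := by
        apply lintegral_congr; intro x
        rw [ENNReal.mul_rpow_of_nonneg _ _ hq0.le, ← ENNReal.rpow_mul,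
          one_div, inv_mul_cancel₀ hq0.ne', ENNReal.rpow_one]
    _ = (∫⁻ x, ∫⁻ y, G y ^ p * F (x - y) ^ r) * (A ^ a1 * B ^ a2) ^ q :=
        lintegral_mul_const' _ _ hCne
    _ = (∫⁻ y, ∫⁻ x, G y ^ p * F (x - y) ^ r) * (A ^ a1 * B ^ a2) ^ q := by
        rw [lintegral_lintegral_swap]
        exact (((ENNReal.continuous_rpow_const.measurable).comp (hG.comp measurable_snd)).mul
          ((ENNReal.continuous_rpow_const.measurable).comp
            (hF.comp (measurable_fst.sub measurable_snd)))).aemeasurable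
    _ = (∫⁻ y, G y ^ p * B) * (A ^ a1 * B ^ a2) ^ q := by
        congr 1; apply lintegral_congr; intro y
        have hm : Measurable fun x : Ed => F (x - y) ^ r :=
          (hF.comp (measurable_id'.sub measurable_const)).pow_const r
        rw [lintegral_const_mul _ hm]
        congr 1
        exact lint_sub_right (fun z => F z ^ r) (hF.pow_const r).aemeasurable y
    _ = A * B * (A ^ a1 * B ^ a2) ^ q := by rw [lintegral_mul_const' _ _ hB, hAdef]
    _ = (A * A ^ (q * a1)) * (B * B ^ (q * a2)) := by
        rw [ENNReal.mul_rpow_of_nonneg _ _ hq0.le, ← ENNReal.rpow_mul, ← ENNReal.rpow_mul,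
          mul_comm a1 q, mul_comm a2 q]
        ring
    _ = A ^ (q/p) * B ^ (q/r) := by
        rw [← hqa1, ← hqa2]
        congr 1
        · calc A * A ^ (q * a1) = A ^ (1:ℝ) * A ^ (q * a1) := by rw [ENNReal.rpow_one]
            _ = A ^ (1 + q * a1) :=
              (ENNReal.rpow_add_of_nonneg _ _ zero_le_one (by positivity)).symm
        · calc B * B ^ (q * a2) = B ^ (1:ℝ) * B ^ (q * a2) := by rw [ENNReal.rpow_one]
            _ = B ^ (1 + q * a2) :=
              (ENNReal.rpow_add_of_nonneg _ _ zero_le_one (by positivity)).symm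

/-- Young's convolution inequality (in the `ℝ≥0∞` world), for exponents
`1 ≤ p, r`, `1 < q < ∞` with `1/p + 1/r = 1 + 1/q`. Here `G` carries exponent `p`
and `F` carries exponent `r`. -/
lemma young (F G : Ed → ℝ≥0∞) (hF : Measurable F) (hG : Measurable G)
    {p r q : ℝ} (hp : 1 ≤ p) (hr : 1 ≤ r) (hq : 1 < q) (hpqr : 1/p + 1/r = 1 + 1/q)
    (hA : (∫⁻ x, G x ^ p ∂(volume : Measure Ed)) ≠ ∞)
    (hB : (∫⁻ x, F x ^ r ∂(volume : Measure Ed)) ≠ ∞) :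
    ∫⁻ x, (∫⁻ y, G y * F (x - y)) ^ q ∂(volume : Measure Ed)
      ≤ (∫⁻ x, G x ^ p ∂(volume : Measure Ed)) ^ (q/p)
        * (∫⁻ x, F x ^ r ∂(volume : Measure Ed)) ^ (q/r) := by
  have hp0 : (0:ℝ) < p := by linarith
  have hr0 : (0:ℝ) < r := by linarith
  have hq0 : (0:ℝ) < q := by linarith
  rcases eq_or_lt_of_le hr with hr1 | hr1
  · -- r = 1, so p = q
    have hpq : p = q := by
      have h1 : 1/p = 1/q := by rw [← hr1] at hpqr; linarith
      field_simp at h1; linarith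
    subst hpq
    rw [← hr1]
    have h2 : (∫⁻ x, F x ^ (1:ℝ) ∂(volume : Measure Ed)) = ∫⁻ x, F x := by
      simp [ENNReal.rpow_one]
    rw [h2, div_self hq0.ne', div_one, ENNReal.rpow_one]
    have hB' : (∫⁻ x, F x ∂(volume : Measure Ed)) ≠ ∞ := by rwa [← hr1, h2] at hB
    exact young_one F G hF hG hq hB'
  · rcases eq_or_lt_of_le hp with hp1 | hp1
    · -- p = 1, so r = q
      have hrq : r = q := by
        have h1 : 1/r = 1/q := by rw [← hp1] at hpqr; linarith
        field_simp at h1; linarith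
      rw [hrq] at hB
      rw [hrq, ← hp1]
      have h2 : (∫⁻ x, G x ^ (1:ℝ) ∂(volume : Measure Ed)) = ∫⁻ x, G x := by
        simp [ENNReal.rpow_one]
      rw [h2, div_one, div_self hq0.ne', ENNReal.rpow_one]
      have hA' : (∫⁻ x, G x ∂(volume : Measure Ed)) ≠ ∞ := by rwa [← hp1, h2] at hA
      have hswap : ∀ x : Ed, ∫⁻ y, G y * F (x - y) = ∫⁻ y, F y * G (x - y) := by
        intro x
        have hm : AEMeasurable (fun y : Ed => G y * F (x - y)) volume :=
          (hG.mul (hF.comp (measurable_const.sub measurable_id))).aemeasurable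
        calc ∫⁻ y, G y * F (x - y)
            = ∫⁻ z, G (x - z) * F (x - (x - z)) := (lint_sub_left _ hm x).symm
          _ = ∫⁻ z, F z * G (x - z) :=
              lintegral_congr fun z => by rw [sub_sub_cancel, mul_comm]
      calc ∫⁻ x, (∫⁻ y, G y * F (x - y)) ^ q
          = ∫⁻ x, (∫⁻ y, F y * G (x - y)) ^ q :=
            lintegral_congr fun x => by rw [hswap x]
        _ ≤ (∫⁻ x, F x ^ q) * (∫⁻ x, G x) ^ q := young_one G F hG hF hq hA'
        _ = (∫⁻ x, G x) ^ q * (∫⁻ x, F x ^ q) := by rw [mul_comm]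
    · -- generic case
      exact young_gen F G hF hG hp1 hr1 hq hpqr hA hB

/-- Finiteness of the near-origin power integral, `0 < s < d`. -/
lemma finite_near {s : ℝ} (hs0 : 0 < s) (hsd : s < (d:ℝ)) :
    ∫⁻ x : Ed in ball 0 1, ENNReal.ofReal (‖x‖ ^ (-s)) < ∞ := by
  have hmeas : Measurable fun x : Ed => ‖x‖ ^ (-s) := by fun_prop
  have hnn : (0:ℝ→ℝ) ≤ fun _ => 0 := le_rfl
  rw [lintegral_eq_lintegral_meas_le _
    (ae_of_all _ fun x => Real.rpow_nonneg (norm_nonneg _) _) hmeas.aemeasurable]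
  set μ' := (volume : Measure Ed).restrict (ball 0 1) with hμ'
  have hball : (volume : Measure Ed) (ball 0 1) < ∞ := measure_ball_lt_top
  calc ∫⁻ t in Ioi (0:ℝ), μ' {a : Ed | t ≤ ‖a‖ ^ (-s)}
      ≤ ∫⁻ t in Ioc (0:ℝ) 1 ∪ Ioi 1, μ' {a : Ed | t ≤ ‖a‖ ^ (-s)} :=
        lintegral_mono_set Ioi_subset_Ioc_union_Ioi
    _ ≤ (∫⁻ t in Ioc (0:ℝ) 1, μ' {a : Ed | t ≤ ‖a‖ ^ (-s)})
        + ∫⁻ t in Ioi (1:ℝ), μ' {a : Ed | t ≤ ‖a‖ ^ (-s)} := lintegral_union_le _ _ _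
    _ < ∞ := by
        refine ENNReal.add_lt_top.2 ⟨?_, ?_⟩
        · calc ∫⁻ t in Ioc (0:ℝ) 1, μ' {a : Ed | t ≤ ‖a‖ ^ (-s)}
              ≤ ∫⁻ _ in Ioc (0:ℝ) 1, (volume : Measure Ed) (ball 0 1) := by
                refine setLIntegral_mono' measurableSet_Ioc fun t _ => ?_
                calc μ' {a : Ed | t ≤ ‖a‖ ^ (-s)} ≤ μ' univ := measure_mono (subset_univ _)
                  _ = (volume : Measure Ed) (ball 0 1) := by
                      rw [hμ', Measure.restrict_apply_univ]
            _ = (volume : Measure Ed) (ball 0 1) * volume (Ioc (0:ℝ) 1) :=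
                setLIntegral_const _ _
            _ < ∞ := by
                refine ENNReal.mul_lt_top hball ?_
                rw [Real.volume_Ioc]
                exact ENNReal.ofReal_lt_top
        · have hsub : ∀ t : ℝ, 0 < t →
              {a : Ed | t ≤ ‖a‖ ^ (-s)} ⊆ closedBall 0 (t ^ (-s⁻¹)) := by
            intro t ht a ha
            simp only [mem_setOf_eq] at ha
            have ha0 : a ≠ 0 := by
              rintro rfl
              rw [norm_zero, Real.zero_rpow (by simpa using hs0.ne')] at ha
              linarith
            have hna : 0 < ‖a‖ := norm_pos_iff.mpr ha0
            rw [mem_closedBall_zero_iff]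
            rw [Real.rpow_neg hna.le] at ha
            have hP : 0 < ‖a‖ ^ s := Real.rpow_pos_of_pos hna s
            have h2 : ‖a‖ ^ s ≤ t⁻¹ := by
              have h3 := mul_le_mul_of_nonneg_left ha hP.le
              rw [mul_inv_cancel₀ hP.ne'] at h3
              rw [← one_div, le_div_iff₀ ht]
              linarith
            calc ‖a‖ = (‖a‖ ^ s) ^ s⁻¹ := by
                  rw [← Real.rpow_mul (norm_nonneg _), mul_inv_cancel₀ hs0.ne',
                    Real.rpow_one]
              _ ≤ (t⁻¹) ^ s⁻¹ := Real.rpow_le_rpow hP.le h2 (by positivity)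
              _ = t ^ (-s⁻¹) := by
                  rw [← Real.rpow_neg_one t, ← Real.rpow_mul ht.le, neg_one_mul]
          have hd1 : 1 < (d:ℝ)/s := (one_lt_div hs0).mpr hsd
          calc ∫⁻ t in Ioi (1:ℝ), μ' {a : Ed | t ≤ ‖a‖ ^ (-s)}
              ≤ ∫⁻ t in Ioi (1:ℝ),
                  ENNReal.ofReal (t ^ (-((d:ℝ)/s))) * (volume : Measure Ed) (ball 0 1) := by
                refine setLIntegral_mono' measurableSet_Ioi fun t ht => ?_
                have ht0 : (0:ℝ) < t := lt_trans one_pos ht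
                calc μ' {a : Ed | t ≤ ‖a‖ ^ (-s)}
                    ≤ μ' (closedBall 0 (t ^ (-s⁻¹))) := measure_mono (hsub t ht0)
                  _ ≤ (volume : Measure Ed) (closedBall 0 (t ^ (-s⁻¹))) :=
                      Measure.restrict_le_self _
                  _ = ENNReal.ofReal ((t ^ (-s⁻¹)) ^ Module.finrank ℝ (EuclideanSpace ℝ (Fin d)))
                        * (volume : Measure Ed) (ball 0 1) :=
                      Measure.addHaar_closedBall _ _ (Real.rpow_nonneg ht0.le _)
                  _ = ENNReal.ofReal (t ^ (-((d:ℝ)/s))) * (volume : Measure Ed) (ball 0 1) := by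
                      congr 2
                      rw [finrank_euclideanSpace_fin, ← Real.rpow_natCast (t ^ (-s⁻¹)) d,
                        ← Real.rpow_mul ht0.le]
                      congr 1
                      field_simp
            _ = (∫⁻ t in Ioi (1:ℝ), ENNReal.ofReal (t ^ (-((d:ℝ)/s))))
                  * (volume : Measure Ed) (ball 0 1) :=
                lintegral_mul_const' _ _ hball.ne
            _ < ∞ := by
                refine ENNReal.mul_lt_top ?_ hball
                exact (integrableOn_Ioi_rpow_of_lt (by linarith) one_pos).setLIntegral_lt_top

/-- Finiteness of the far-field power integral, `s' > d`. -/
lemma finite_far {s' : ℝ} (hds : (d:ℝ) < s') :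
    ∫⁻ x : Ed in (ball 0 1)ᶜ, ENNReal.ofReal (‖x‖ ^ (-s')) < ∞ := by
  have hs'0 : (0:ℝ) < s' := lt_of_le_of_lt (Nat.cast_nonneg d) hds
  calc ∫⁻ x : Ed in (ball 0 1)ᶜ, ENNReal.ofReal (‖x‖ ^ (-s'))
      ≤ ∫⁻ x : Ed in (ball 0 1)ᶜ, ENNReal.ofReal (2 ^ s' * (1 + ‖x‖) ^ (-s')) := by
        refine setLIntegral_mono' measurableSet_ball.compl fun x hx => ?_
        apply ENNReal.ofReal_le_ofReal
        have hx1 : 1 ≤ ‖x‖ := not_lt.mp fun h => hx (mem_ball_zero_iff.mpr h)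
        have hx0 : (0:ℝ) < ‖x‖ := lt_of_lt_of_le one_pos hx1
        rw [Real.rpow_neg hx0.le, Real.rpow_neg (by positivity : (0:ℝ) ≤ 1 + ‖x‖)]
        have hP : (0:ℝ) < ‖x‖ ^ s' := Real.rpow_pos_of_pos hx0 _
        have hQ : (0:ℝ) < (1 + ‖x‖) ^ s' := Real.rpow_pos_of_pos (by positivity) _
        have h1 : (1 + ‖x‖) ^ s' ≤ 2 ^ s' * ‖x‖ ^ s' := by
          rw [← Real.mul_rpow (by norm_num) hx0.le]
          exact Real.rpow_le_rpow (by positivity) (by linarith) hs'0.le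
        rw [inv_eq_one_div, inv_eq_one_div ((1 + ‖x‖) ^ s'), mul_one_div,
          div_le_div_iff₀ hP hQ, one_mul]
        exact h1
    _ ≤ ∫⁻ x : Ed, ENNReal.ofReal (2 ^ s' * (1 + ‖x‖) ^ (-s')) := setLIntegral_le_lintegral _ _
    _ = ENNReal.ofReal (2 ^ s') * ∫⁻ x : Ed, ENNReal.ofReal ((1 + ‖x‖) ^ (-s')) := by
        rw [← lintegral_const_mul' _ _ ENNReal.ofReal_ne_top]
        exact lintegral_congr fun x =>
          ENNReal.ofReal_mul (by positivity)
    _ < ∞ := by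
        refine ENNReal.mul_lt_top ENNReal.ofReal_lt_top ?_
        apply finite_integral_one_add_norm
        rwa [finrank_euclideanSpace_fin]

/-- Pointwise bound for the Lennard-Jones kernel by power kernels. -/
lemma LJ_nnnorm_le {ε R₀ a b : ℝ} (hε : 0 < ε) (hR : 0 < R₀) (hb : 0 < b) (hba : b < a)
    (x : Ed) :
    (‖LJ d ε R₀ a b x‖₊ : ℝ≥0∞) ≤ ENNReal.ofReal (ε * (R₀ ^ a + R₀ ^ b)) *
      ((ball (0:Ed) 1).indicator (fun z => ENNReal.ofReal (‖z‖ ^ (-(a+1)))) x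
        + ((ball (0:Ed) 1)ᶜ).indicator (fun z => ENNReal.ofReal (‖z‖ ^ (-(b+1)))) x) := by
  have ha : 0 < a := hb.trans hba
  have hc0 : 0 ≤ ε * (R₀ ^ a + R₀ ^ b) := by positivity
  have hcoe : (‖LJ d ε R₀ a b x‖₊ : ℝ≥0∞) = ENNReal.ofReal ‖LJ d ε R₀ a b x‖ :=
    (ofReal_norm (LJ d ε R₀ a b x)).symm
  by_cases hx0 : x = 0
  · subst hx0
    have : LJ d ε R₀ a b (0 : Ed) = 0 := by
      simp [LJ]
    rw [hcoe, this, norm_zero, ENNReal.ofReal_zero]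
    exact bot_le
  have hn0 : 0 < ‖x‖ := norm_pos_iff.mpr hx0
  have hnorm : ‖LJ d ε R₀ a b x‖
      = ε * |R₀ ^ a / ‖x‖ ^ (a + 1) - R₀ ^ b / ‖x‖ ^ (b + 1)| := by
    have hunit : ‖(‖x‖⁻¹ • x : Ed)‖ = 1 := by
      rw [norm_smul, norm_inv, norm_norm, inv_mul_cancel₀ hn0.ne']
    rw [LJ, norm_smul, hunit, mul_one, Real.norm_eq_abs, abs_mul, abs_of_pos hε]
  by_cases hx : x ∈ ball (0:Ed) 1
  · have hn1 : ‖x‖ < 1 := mem_ball_zero_iff.mp hx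
    rw [indicator_of_mem hx, indicator_of_notMem (by simpa using hx), add_zero,
      ← ENNReal.ofReal_mul hc0, hcoe]
    apply ENNReal.ofReal_le_ofReal
    rw [hnorm]
    have hd1 : R₀ ^ a / ‖x‖ ^ (a + 1) = R₀ ^ a * ‖x‖ ^ (-(a+1)) := by
      rw [div_eq_mul_inv, ← Real.rpow_neg hn0.le]
    have hd2 : R₀ ^ b / ‖x‖ ^ (b + 1) = R₀ ^ b * ‖x‖ ^ (-(b+1)) := by
      rw [div_eq_mul_inv, ← Real.rpow_neg hn0.le]
    have hmono : ‖x‖ ^ (-(b+1)) ≤ ‖x‖ ^ (-(a+1)) :=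
      Real.rpow_le_rpow_of_exponent_ge hn0 hn1.le (by linarith)
    have habs : |R₀ ^ a / ‖x‖ ^ (a + 1) - R₀ ^ b / ‖x‖ ^ (b + 1)|
        ≤ R₀ ^ a * ‖x‖ ^ (-(a+1)) + R₀ ^ b * ‖x‖ ^ (-(b+1)) := by
      rw [hd1, hd2]
      refine (abs_sub _ _).trans ?_
      rw [abs_of_nonneg (by positivity), abs_of_nonneg (by positivity)]
    have hbnd : R₀ ^ b * ‖x‖ ^ (-(b+1)) ≤ R₀ ^ b * ‖x‖ ^ (-(a+1)) := by
      have : (0:ℝ) ≤ R₀ ^ b := by positivity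
      exact mul_le_mul_of_nonneg_left hmono this
    calc ε * |R₀ ^ a / ‖x‖ ^ (a + 1) - R₀ ^ b / ‖x‖ ^ (b + 1)|
        ≤ ε * (R₀ ^ a * ‖x‖ ^ (-(a+1)) + R₀ ^ b * ‖x‖ ^ (-(a+1))) := by
          refine mul_le_mul_of_nonneg_left (habs.trans ?_) hε.le
          linarith
      _ = ε * (R₀ ^ a + R₀ ^ b) * ‖x‖ ^ (-(a+1)) := by ring
  · have hn1 : 1 ≤ ‖x‖ := not_lt.mp fun h => hx (mem_ball_zero_iff.mpr h)
    rw [indicator_of_notMem hx, indicator_of_mem (by simpa using hx), zero_add,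
      ← ENNReal.ofReal_mul hc0, hcoe]
    apply ENNReal.ofReal_le_ofReal
    rw [hnorm]
    have hd1 : R₀ ^ a / ‖x‖ ^ (a + 1) = R₀ ^ a * ‖x‖ ^ (-(a+1)) := by
      rw [div_eq_mul_inv, ← Real.rpow_neg hn0.le]
    have hd2 : R₀ ^ b / ‖x‖ ^ (b + 1) = R₀ ^ b * ‖x‖ ^ (-(b+1)) := by
      rw [div_eq_mul_inv, ← Real.rpow_neg hn0.le]
    have hmono : ‖x‖ ^ (-(a+1)) ≤ ‖x‖ ^ (-(b+1)) :=
      Real.rpow_le_rpow_of_exponent_le hn1 (by linarith)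
    have habs : |R₀ ^ a / ‖x‖ ^ (a + 1) - R₀ ^ b / ‖x‖ ^ (b + 1)|
        ≤ R₀ ^ a * ‖x‖ ^ (-(a+1)) + R₀ ^ b * ‖x‖ ^ (-(b+1)) := by
      rw [hd1, hd2]
      refine (abs_sub _ _).trans ?_
      rw [abs_of_nonneg (by positivity), abs_of_nonneg (by positivity)]
    calc ε * |R₀ ^ a / ‖x‖ ^ (a + 1) - R₀ ^ b / ‖x‖ ^ (b + 1)|
        ≤ ε * (R₀ ^ a * ‖x‖ ^ (-(b+1)) + R₀ ^ b * ‖x‖ ^ (-(b+1))) := by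
          refine mul_le_mul_of_nonneg_left (habs.trans ?_) hε.le
          have : (0:ℝ) ≤ R₀ ^ a := by positivity
          have h2 := mul_le_mul_of_nonneg_left hmono this
          linarith
      _ = ε * (R₀ ^ a + R₀ ^ b) * ‖x‖ ^ (-(b+1)) := by ring

end LJaux

open LJaux

/-- Convolution with the Lennard-Jones kernel maps L¹ ∩ L^r boundedly into L^q,
where 1/r = 1 + 1/q − 1/p, p ∈ [1, d/(a+1)), q ∈ (d/(b+1), ∞). -/
theorem LJ_conv_bounded_Lq (d : ℕ) (hd : 2 ≤ d) (ε R₀ a b : ℝ)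
    (hε : 0 < ε) (hR : 0 < R₀) (hb : 0 < b) (hba : b < a) (had : a < (d : ℝ) - 1)
    (p q r : ℝ) (hp1 : 1 ≤ p) (hp2 : p < (d : ℝ) / (a + 1))
    (hq : (d : ℝ) / (b + 1) < q) (hr : 1 < r)
    (hpqr : 1 / r = 1 + 1 / q - 1 / p) :
    ∃ C > 0, ∀ f : EuclideanSpace ℝ (Fin d) → ℝ,
      MemLp f 1 volume → MemLp f (ENNReal.ofReal r) volume →
      eLpNorm (fun x => ∫ y, f y • LJ d ε R₀ a b (x - y)) (ENNReal.ofReal q) volume ≤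
        ENNReal.ofReal C *
          (eLpNorm f 1 volume + eLpNorm f (ENNReal.ofReal r) volume) := by
  classical
  set E := EuclideanSpace ℝ (Fin d)
  have ha : 0 < a := hb.trans hba
  have ha1 : (0:ℝ) < a + 1 := by linarith
  have hb1 : (0:ℝ) < b + 1 := by linarith
  have hdb : b + 1 < (d:ℝ) := by
    have : (2:ℝ) ≤ d := by exact_mod_cast hd
    linarith
  have hq1 : (1:ℝ) < q := lt_trans ((one_lt_div hb1).mpr hdb) hq
  have hq0 : (0:ℝ) < q := by linarith
  have hp0 : (0:ℝ) < p := by linarith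
  have hr0 : (0:ℝ) < r := by linarith
  -- kernel exponents
  have hs1pos : (0:ℝ) < (a+1) * p := by positivity
  have hs1lt : (a+1) * p < (d:ℝ) := by
    have := (lt_div_iff₀ ha1).mp hp2
    linarith
  have hs2gt : (d:ℝ) < (b+1) * q := by
    have := (div_lt_iff₀ hb1).mp hq
    linarith
  -- the two power kernels
  set Φ₁ : E → ℝ≥0∞ :=
    (ball (0:E) 1).indicator (fun z => ENNReal.ofReal (‖z‖ ^ (-(a+1)))) with hΦ₁def
  set Φ₂ : E → ℝ≥0∞ :=
    ((ball (0:E) 1)ᶜ).indicator (fun z => ENNReal.ofReal (‖z‖ ^ (-(b+1)))) with hΦ₂def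
  have hΦ₁m : Measurable Φ₁ := by
    apply Measurable.indicator _ measurableSet_ball
    fun_prop
  have hΦ₂m : Measurable Φ₂ := by
    apply Measurable.indicator _ measurableSet_ball.compl
    fun_prop
  -- finiteness of the kernel integrals
  have hA1 : (∫⁻ x, Φ₁ x ^ p ∂(volume : Measure E)) ≠ ∞ := by
    have heq : (fun x : E => Φ₁ x ^ p)
        = (ball (0:E) 1).indicator (fun z => ENNReal.ofReal (‖z‖ ^ (-((a+1) * p)))) := by
      funext x
      rw [hΦ₁def]
      by_cases hx : x ∈ ball (0:E) 1
      · rw [indicator_of_mem hx, indicator_of_mem hx,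
          ENNReal.ofReal_rpow_of_nonneg (Real.rpow_nonneg (norm_nonneg _) _) hp0.le,
          ← Real.rpow_mul (norm_nonneg _), neg_mul]
      · rw [indicator_of_notMem hx, indicator_of_notMem hx,
          ENNReal.zero_rpow_of_pos hp0]
    rw [heq, lintegral_indicator measurableSet_ball]
    exact (finite_near hs1pos hs1lt).ne
  have hA2 : (∫⁻ x, Φ₂ x ^ q ∂(volume : Measure E)) ≠ ∞ := by
    have heq : (fun x : E => Φ₂ x ^ q)
        = ((ball (0:E) 1)ᶜ).indicator
            (fun z => ENNReal.ofReal (‖z‖ ^ (-((b+1) * q)))) := by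
      funext x
      rw [hΦ₂def]
      by_cases hx : x ∈ (ball (0:E) 1)ᶜ
      · rw [indicator_of_mem hx, indicator_of_mem hx,
          ENNReal.ofReal_rpow_of_nonneg (Real.rpow_nonneg (norm_nonneg _) _) hq0.le,
          ← Real.rpow_mul (norm_nonneg _), neg_mul]
      · rw [indicator_of_notMem hx, indicator_of_notMem hx,
          ENNReal.zero_rpow_of_pos hq0]
    rw [heq, lintegral_indicator measurableSet_ball.compl]
    exact (finite_far hs2gt).ne
  -- the constant
  set c0 : ℝ := ε * (R₀ ^ a + R₀ ^ b) with hc0def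
  have hc0 : 0 < c0 := by positivity
  set A1p : ℝ≥0∞ := (∫⁻ x, Φ₁ x ^ p ∂(volume : Measure E)) ^ (1/p) with hA1pdef
  set A2q : ℝ≥0∞ := (∫⁻ x, Φ₂ x ^ q ∂(volume : Measure E)) ^ (1/q) with hA2qdef
  have hA1pfin : A1p ≠ ∞ := ENNReal.rpow_ne_top_of_nonneg (by positivity) hA1
  have hA2qfin : A2q ≠ ∞ := ENNReal.rpow_ne_top_of_nonneg (by positivity) hA2
  refine ⟨c0 * (A1p.toReal + A2q.toReal + 1), by positivity, ?_⟩
  intro f hf1 hfr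
  -- measurable representative of ‖f‖ in ℝ≥0∞
  set F0 : E → ℝ≥0∞ := fun y => (‖hf1.1.mk f y‖₊ : ℝ≥0∞) with hF0def
  have hF0m : Measurable F0 :=
    measurable_coe_nnreal_ennreal.comp hf1.1.stronglyMeasurable_mk.measurable.nnnorm
  have hFae : (fun y : E => (‖f y‖₊ : ℝ≥0∞)) =ᵐ[volume] F0 :=
    hf1.1.ae_eq_mk.mono fun y hy => by dsimp only; rw [hy]
  have hB1eq : (∫⁻ y, F0 y ∂(volume : Measure E)) = eLpNorm f 1 volume := by
    rw [eLpNorm_one_eq_lintegral_enorm]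
    exact (lintegral_congr_ae hFae).symm
  have hB1fin : (∫⁻ y, F0 y ∂(volume : Measure E)) ≠ ∞ := by
    rw [hB1eq]; exact hf1.2.ne
  have hqrne : (ENNReal.ofReal r) ≠ 0 := (ENNReal.ofReal_pos.mpr hr0).ne'
  have hBreq : (∫⁻ y, F0 y ^ r ∂(volume : Measure E)) ^ (1/r)
      = eLpNorm f (ENNReal.ofReal r) volume := by
    rw [eLpNorm_eq_lintegral_rpow_enorm_toReal hqrne ENNReal.ofReal_ne_top,
      ENNReal.toReal_ofReal hr0.le]
    congr 1
    exact (lintegral_congr_ae (hFae.mono fun y hy => by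
      rw [show ‖f y‖ₑ = F0 y from hy])).symm
  have hBrfin : (∫⁻ y, F0 y ^ r ∂(volume : Measure E)) ≠ ∞ := by
    intro htop
    have h2 := hfr.2.ne
    rw [← hBreq, htop, ENNReal.top_rpow_of_pos (by positivity)] at h2
    exact h2 rfl
  -- the convolution pieces
  set C1 : E → ℝ≥0∞ := fun x => ∫⁻ y, F0 y * Φ₁ (x - y) with hC1def
  set C2 : E → ℝ≥0∞ := fun x => ∫⁻ y, F0 y * Φ₂ (x - y) with hC2def
  have hC1m : Measurable C1 :=
    Measurable.lintegral_prod_right'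
      ((hF0m.comp measurable_snd).mul (hΦ₁m.comp (measurable_fst.sub measurable_snd)))
  have hC2m : Measurable C2 :=
    Measurable.lintegral_prod_right'
      ((hF0m.comp measurable_snd).mul (hΦ₂m.comp (measurable_fst.sub measurable_snd)))
  set c0' : ℝ≥0∞ := ENNReal.ofReal c0 with hc0'def
  set g : E → E := fun x => ∫ y, f y • LJ d ε R₀ a b (x - y) with hgdef
  -- pointwise bound
  have hpt : ∀ x : E, (‖g x‖₊ : ℝ≥0∞) ≤ c0' * (C1 x + C2 x) := by
    intro x
    calc (‖g x‖₊ : ℝ≥0∞) ≤ ∫⁻ y, ‖f y • LJ d ε R₀ a b (x - y)‖₊ :=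
          enorm_integral_le_lintegral_enorm _
      _ = ∫⁻ y, (‖f y‖₊ : ℝ≥0∞) * (‖LJ d ε R₀ a b (x - y)‖₊ : ℝ≥0∞) := by
          apply lintegral_congr; intro y
          rw [nnnorm_smul, ENNReal.coe_mul]
      _ = ∫⁻ y, F0 y * (‖LJ d ε R₀ a b (x - y)‖₊ : ℝ≥0∞) :=
          lintegral_congr_ae (hFae.mono fun y hy => by
            dsimp only; rw [show (‖f y‖₊ : ℝ≥0∞) = F0 y from hy])
      _ ≤ ∫⁻ y, F0 y * (c0' * (Φ₁ (x - y) + Φ₂ (x - y))) :=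
          lintegral_mono fun y => mul_le_mul_right
            (LJ_nnnorm_le hε hR hb hba (x - y)) _
      _ = ∫⁻ y, c0' * (F0 y * Φ₁ (x - y) + F0 y * Φ₂ (x - y)) := by
          apply lintegral_congr; intro y; ring
      _ = c0' * (C1 x + C2 x) := by
          have hm : Measurable fun y : E => F0 y * Φ₁ (x - y) :=
            hF0m.mul (hΦ₁m.comp (measurable_const.sub measurable_id))
          rw [lintegral_const_mul' _ _ ENNReal.ofReal_ne_top, lintegral_add_left hm]
  -- Young for the two pieces
  have hpqr1 : 1/r + 1/p = 1 + 1/q := by linarith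
  have hy1 : ∫⁻ x, C1 x ^ q ∂(volume : Measure E)
      ≤ (∫⁻ x, F0 x ^ r ∂(volume : Measure E)) ^ (q/r)
        * (∫⁻ x, Φ₁ x ^ p ∂(volume : Measure E)) ^ (q/p) :=
    young Φ₁ F0 hΦ₁m hF0m hr.le hp1 hq1 hpqr1 hBrfin hA1
  have hy2 : ∫⁻ x, C2 x ^ q ∂(volume : Measure E)
      ≤ (∫⁻ x, F0 x ^ (1:ℝ) ∂(volume : Measure E)) ^ (q/1)
        * (∫⁻ x, Φ₂ x ^ q ∂(volume : Measure E)) ^ (q/q) := by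
    refine young Φ₂ F0 hΦ₂m hF0m le_rfl hq1.le hq1 (by norm_num) ?_ hA2
    simpa [ENNReal.rpow_one] using hB1fin
  have hy1' : (∫⁻ x, C1 x ^ q ∂(volume : Measure E)) ^ (1/q)
      ≤ eLpNorm f (ENNReal.ofReal r) volume * A1p := by
    rw [← hBreq, hA1pdef]
    calc (∫⁻ x, C1 x ^ q ∂(volume : Measure E)) ^ (1/q)
        ≤ ((∫⁻ x, F0 x ^ r ∂(volume : Measure E)) ^ (q/r)
            * (∫⁻ x, Φ₁ x ^ p ∂(volume : Measure E)) ^ (q/p)) ^ (1/q) :=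
          ENNReal.rpow_le_rpow hy1 (by positivity)
      _ = (∫⁻ x, F0 x ^ r ∂(volume : Measure E)) ^ (1/r)
            * (∫⁻ x, Φ₁ x ^ p ∂(volume : Measure E)) ^ (1/p) := by
          rw [ENNReal.mul_rpow_of_nonneg _ _ (by positivity), ← ENNReal.rpow_mul,
            ← ENNReal.rpow_mul]
          congr 2
          · field_simp
          · field_simp
  have h10 : (∫⁻ x, F0 x ^ (1:ℝ) ∂(volume : Measure E)) = ∫⁻ x, F0 x ∂(volume : Measure E) :=
    lintegral_congr fun x => ENNReal.rpow_one _
  rw [h10] at hy2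
  have hy2' : (∫⁻ x, C2 x ^ q ∂(volume : Measure E)) ^ (1/q)
      ≤ eLpNorm f 1 volume * A2q := by
    rw [← hB1eq, hA2qdef]
    calc (∫⁻ x, C2 x ^ q ∂(volume : Measure E)) ^ (1/q)
        ≤ ((∫⁻ x, F0 x ∂(volume : Measure E)) ^ (q/1)
            * (∫⁻ x, Φ₂ x ^ q ∂(volume : Measure E)) ^ (q/q)) ^ (1/q) :=
          ENNReal.rpow_le_rpow hy2 (by positivity)
      _ = (∫⁻ x, F0 x ∂(volume : Measure E))
            * (∫⁻ x, Φ₂ x ^ q ∂(volume : Measure E)) ^ (1/q) := by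
          rw [ENNReal.mul_rpow_of_nonneg _ _ (by positivity), ← ENNReal.rpow_mul,
            ← ENNReal.rpow_mul, div_one, mul_one_div_cancel hq0.ne',
            div_self hq0.ne', one_mul, ENNReal.rpow_one]
  -- main estimate
  have hqofne : (ENNReal.ofReal q) ≠ 0 := (ENNReal.ofReal_pos.mpr hq0).ne'
  rw [eLpNorm_eq_lintegral_rpow_enorm_toReal hqofne ENNReal.ofReal_ne_top,
    ENNReal.toReal_ofReal hq0.le]
  have hM : c0' * (A1p + A2q) ≤ ENNReal.ofReal (c0 * (A1p.toReal + A2q.toReal + 1)) := by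
    rw [ENNReal.ofReal_mul hc0.le, hc0'def]
    refine mul_le_mul_right ?_ _
    calc A1p + A2q = ENNReal.ofReal A1p.toReal + ENNReal.ofReal A2q.toReal := by
          rw [ENNReal.ofReal_toReal hA1pfin, ENNReal.ofReal_toReal hA2qfin]
      _ = ENNReal.ofReal (A1p.toReal + A2q.toReal) :=
          (ENNReal.ofReal_add ENNReal.toReal_nonneg ENNReal.toReal_nonneg).symm
      _ ≤ ENNReal.ofReal (A1p.toReal + A2q.toReal + 1) :=
          ENNReal.ofReal_le_ofReal (by linarith)
  calc (∫⁻ x, (‖g x‖₊ : ℝ≥0∞) ^ q ∂(volume : Measure E)) ^ (1/q)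
      ≤ (∫⁻ x, (c0' * (C1 x + C2 x)) ^ q ∂(volume : Measure E)) ^ (1/q) :=
        ENNReal.rpow_le_rpow
          (lintegral_mono fun x => ENNReal.rpow_le_rpow (hpt x) hq0.le) (by positivity)
    _ = c0' * (∫⁻ x, (C1 x + C2 x) ^ q ∂(volume : Measure E)) ^ (1/q) := by
        have : (fun x : E => (c0' * (C1 x + C2 x)) ^ q)
            = fun x => c0' ^ q * (C1 x + C2 x) ^ q := by
          funext x; rw [ENNReal.mul_rpow_of_nonneg _ _ hq0.le]
        rw [this, lintegral_const_mul' _ _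
            (ENNReal.rpow_ne_top_of_nonneg hq0.le ENNReal.ofReal_ne_top),
          ENNReal.mul_rpow_of_nonneg _ _ (by positivity), ← ENNReal.rpow_mul,
          mul_one_div_cancel hq0.ne', ENNReal.rpow_one]
    _ ≤ c0' * ((∫⁻ x, C1 x ^ q ∂(volume : Measure E)) ^ (1/q)
          + (∫⁻ x, C2 x ^ q ∂(volume : Measure E)) ^ (1/q)) := by
        refine mul_le_mul_right ?_ _
        exact ENNReal.lintegral_Lp_add_le hC1m.aemeasurable hC2m.aemeasurable hq1.le
    _ ≤ c0' * (eLpNorm f (ENNReal.ofReal r) volume * A1p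
          + eLpNorm f 1 volume * A2q) := by
        refine mul_le_mul_right (add_le_add hy1' hy2') _
    _ ≤ c0' * ((A1p + A2q) * (eLpNorm f 1 volume + eLpNorm f (ENNReal.ofReal r) volume)) := by
        refine mul_le_mul_right ?_ _
        calc eLpNorm f (ENNReal.ofReal r) volume * A1p + eLpNorm f 1 volume * A2q
            ≤ eLpNorm f (ENNReal.ofReal r) volume * (A1p + A2q)
              + eLpNorm f 1 volume * (A1p + A2q) := by
              refine add_le_add (mul_le_mul_right le_self_add _)
                (mul_le_mul_right le_add_self _)
          _ = (A1p + A2q) * (eLpNorm f 1 volume + eLpNorm f (ENNReal.ofReal r) volume) := by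
              ring
    _ = (c0' * (A1p + A2q))
          * (eLpNorm f 1 volume + eLpNorm f (ENNReal.ofReal r) volume) := by ring
    _ ≤ ENNReal.ofReal (c0 * (A1p.toReal + A2q.toReal + 1))
          * (eLpNorm f 1 volume + eLpNorm f (ENNReal.ofReal r) volume) :=
        mul_le_mul_left hM _
end
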